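/- Work in ℝⁿ (n ≥ 1) with the Lebesgue measure λ and the ℓᵖ metric for any fixed 1 ≤ p ≤ ∞. Let A ⊆ ℝⁿ be Lebesgue-measurable with λ(A) > 0 and λ(ℝⁿ∖A) > 0, and suppose A is solid: the density D_A(x) exists for every x ∈ ℝⁿ. Then the set {x ∈ Fr_μ(A) : D_A(x) = 1/2} is comeager in the subspace Fr_μ(A). In particular there exists a point x with D_A(x) = 1/2, and consequently there is no measurable A ⊆ ℝⁿ with λ(A) > 0 and λ(ℝⁿ∖A) > 0 such that D_A(x) ∈ {0,1} for every x ∈ ℝⁿ. -/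

import Mathlib

open MeasureTheory Metric Set Filter Topology
open scoped ENNReal

/-- Borel measurable structure on `ℝⁿ` with the `ℓᵖ` metric. -/
noncomputable instance instMeasPiLp (p : ℝ≥0∞) (n : ℕ) :
    MeasurableSpace (PiLp p fun _ : Fin n => ℝ) := borel _

instance instBorelPiLp (p : ℝ≥0∞) (n : ℕ) :
    BorelSpace (PiLp p fun _ : Fin n => ℝ) := ⟨rfl⟩

/-- Lebesgue measure on `ℝⁿ` with the `ℓᵖ` metric: the pushforward of the Lebesgue measure
on `Fin n → ℝ` along the identity map `(Fin n → ℝ) → PiLp p (fun _ => ℝ)` (which is a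
homeomorphism). -/
noncomputable def pVolume (p : ℝ≥0∞) [Fact (1 ≤ p)] (n : ℕ) :
    Measure (PiLp p fun _ : Fin n => ℝ) :=
  Measure.map (PiLp.continuousLinearEquiv p ℝ (fun _ : Fin n => ℝ)).symm volume

/-- The density of a set `A` at a point `x` (with respect to the `ℓᵖ` metric balls and the
measure `μ`): the limit, as `ε → 0⁺`, of `μ(A ∩ B(x,ε))/μ(B(x,ε))`. -/
def HasDensity {X : Type*} [MetricSpace X] [MeasurableSpace X]
    (μ : Measure X) (A : Set X) (x : X) (v : ℝ) : Prop :=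
  Tendsto (fun e : ℝ => (μ (A ∩ ball x e)).toReal / (μ (ball x e)).toReal)
    (𝓝[>] (0 : ℝ)) (𝓝 v)

/-- The `μ`-frontier of `A`: the points all of whose open neighborhoods meet both `A` and
its complement in positive measure. -/
def muFrontier {X : Type*} [MetricSpace X] [MeasurableSpace X]
    (μ : Measure X) (A : Set X) : Set X :=
  {x | ∀ U : Set X, IsOpen U → x ∈ U → 0 < μ (A ∩ U) ∧ 0 < μ (U \ A)}

/-!
The `μ`-frontier `F` of `A` is closed, hence a Baire space. For `θ, δ > 0` the points of `F` at
which `A` fills a proportion at least `1/2 + θ` of every ball of radius below `δ` form a closed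
set, and it has empty interior in `F`: otherwise almost every frontier point nearby lies in `A`
(Lebesgue density theorem), so near `F` there is a point `w` with a neighbourhood where `A` is
null. The largest Euclidean ball around `w` missing `F` lies in that null region and touches `F`
at a point where the ball, having a tangent hyperplane there (which an `ℓᵖ` ball need not have),
has density `1/2`; so there `A` fills at most about half of small balls. Applied to `A` and to
`Aᶜ`, this makes the points of `F` with a density other than `1/2` a meagre subset of `F`.
-/

open scoped RealInnerProductSpace

section Support

variable {X : Type*} [TopologicalSpace X] [MeasurableSpace X] {μ : Measure X} {A : Set X}

theorem disjoint_compl_support_restrict [μ.IsOpenPosMeasure] (hA : MeasurableSet A) :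
    Disjoint (μ.restrict A).supportᶜ (μ.restrict Aᶜ).supportᶜ := by
  rw [disjoint_iff_inter_eq_empty, ← compl_union, ← Measure.support_add,
    Measure.restrict_add_restrict_compl hA, Measure.support_eq_univ, compl_univ]

theorem measure_inter_compl_support_restrict [OpensMeasurableSpace X]
    [HereditarilyLindelofSpace X] : μ (A ∩ (μ.restrict A).supportᶜ) = 0 := by
  have h := (μ.restrict A).measure_compl_support
  rwa [Measure.restrict_apply Measure.isOpen_compl_support.measurableSet, inter_comm] at h

end Support

theorem isNowhereDense_preimage_val {X : Type*} [TopologicalSpace X] {F S : Set X}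
    (hS : IsClosed S) (h : ∀ U, IsOpen U → (F ∩ U).Nonempty → ¬ F ∩ U ⊆ S) :
    IsNowhereDense ((↑) ⁻¹' S : Set F) := by
  rw [(hS.preimage continuous_subtype_val).isNowhereDense_iff, eq_empty_iff_forall_notMem]
  intro x hx
  obtain ⟨V, hVS, hV, hxV⟩ := mem_interior.mp hx
  obtain ⟨U, hU, rfl⟩ := isOpen_induced_iff.mp hV
  exact h U hU ⟨x, x.2, hxV⟩ fun z hz =>
    hVS (show (⟨z, hz.1⟩ : F) ∈ (↑) ⁻¹' U from hz.2)

section Frontier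

variable {X : Type*} [MetricSpace X] [MeasurableSpace X] [OpensMeasurableSpace X]
  {μ : Measure X} {A : Set X}

/-- `(μ.restrict A).supportᶜ` is the largest open set in which `A` is null. -/
theorem muFrontier_eq_support_inter_support :
    muFrontier μ A = (μ.restrict A).support ∩ (μ.restrict Aᶜ).support := by
  ext x
  simp only [muFrontier, Measure.support_eq_forall_isOpen, mem_ofPred_eq, mem_inter_iff]
  constructor
  · intro h
    refine ⟨fun U hxU hU => ?_, fun U hxU hU => ?_⟩ <;>
      rw [Measure.restrict_apply hU.measurableSet]
    · simpa only [inter_comm] using (h U hU hxU).1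
    · simpa only [← sdiff_eq] using (h U hU hxU).2
  · rintro ⟨h₁, h₂⟩ U hU hxU
    have h₁ := h₁ U hxU hU
    have h₂ := h₂ U hxU hU
    rw [Measure.restrict_apply hU.measurableSet] at h₁ h₂
    exact ⟨by rwa [inter_comm], by rwa [sdiff_eq]⟩

theorem isClosed_muFrontier : IsClosed (muFrontier μ A) := by
  rw [muFrontier_eq_support_inter_support]
  exact Measure.isClosed_support.inter Measure.isClosed_support

theorem muFrontier_compl : muFrontier μ Aᶜ = muFrontier μ A := by
  rw [muFrontier_eq_support_inter_support, muFrontier_eq_support_inter_support, compl_compl,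
    inter_comm]

theorem IsPreconnected.subset_compl_support_restrict_or [μ.IsOpenPosMeasure]
    (hA : MeasurableSet A) {S : Set X} (hS : IsPreconnected S)
    (hSF : Disjoint S (muFrontier μ A)) :
    S ⊆ (μ.restrict A).supportᶜ ∨ S ⊆ (μ.restrict Aᶜ).supportᶜ := by
  refine hS.subset_or_subset Measure.isOpen_compl_support Measure.isOpen_compl_support
    (disjoint_compl_support_restrict hA) ?_
  rw [← compl_inter, ← muFrontier_eq_support_inter_support]
  exact hSF.subset_compl_right

theorem muFrontier_nonempty [PreconnectedSpace X] [HereditarilyLindelofSpace X]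
    [μ.IsOpenPosMeasure] (hA : MeasurableSet A) (hA₀ : μ A ≠ 0) (hAc₀ : μ Aᶜ ≠ 0) :
    (muFrontier μ A).Nonempty := by
  by_contra hF
  rcases isPreconnected_univ.subset_compl_support_restrict_or hA
      (by simp [not_nonempty_iff_eq_empty.mp hF] : Disjoint univ (muFrontier μ A)) with h | h
  · apply hA₀
    simpa [inter_eq_left.mpr ((subset_univ A).trans h)] using
      measure_inter_compl_support_restrict (μ := μ) (A := A)
  · apply hAc₀
    simpa [inter_eq_left.mpr ((subset_univ Aᶜ).trans h)] using
      measure_inter_compl_support_restrict (μ := μ) (A := Aᶜ)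

theorem exists_mem_compl_support_restrict [HereditarilyLindelofSpace X] {x : X} {V : Set X}
    (hx : x ∈ muFrontier μ A) (hV : IsOpen V) (hxV : x ∈ V)
    (hnull : μ ((muFrontier μ A ∩ V) \ A) = 0) :
    ∃ w ∈ V, w ∈ (μ.restrict A).supportᶜ := by
  have hnull' : μ ((Aᶜ ∩ (μ.restrict Aᶜ).supportᶜ) ∪ (muFrontier μ A ∩ V) \ A) = 0 :=
    measure_union_null measure_inter_compl_support_restrict hnull
  obtain ⟨w, ⟨hwV, hwA⟩, hw⟩ := nonempty_of_measure_ne_zero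
    ((measure_sdiff_null hnull').symm ▸ (hx V hV hxV).2.ne')
  refine ⟨w, hwV, ?_⟩
  have hwF : w ∉ muFrontier μ A := fun hwF => hw (Or.inr ⟨⟨hwF, hwV⟩, hwA⟩)
  rw [muFrontier_eq_support_inter_support, mem_inter_iff, not_and_or] at hwF
  exact hwF.resolve_right fun h => hw (Or.inl ⟨hwA, h⟩)

end Frontier

section DensityRatio

variable {X : Type*} [MetricSpace X] [MeasurableSpace X] {μ : Measure X} {A : Set X} {x : X}

noncomputable def densityRatio (μ : Measure X) (A : Set X) (x : X) (r : ℝ) : ℝ :=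
  μ.real (A ∩ ball x r) / μ.real (ball x r)

theorem hasDensity_iff {v : ℝ} :
    HasDensity μ A x v ↔ Tendsto (densityRatio μ A x) (𝓝[>] 0) (𝓝 v) :=
  Iff.rfl

def uniformlyDensePoints (μ : Measure X) (A : Set X) (c δ : ℝ) : Set X :=
  {x | ∀ r ∈ Ioo 0 δ, c ≤ densityRatio μ A x r}

theorem HasDensity.unique {v v' : ℝ} (h : HasDensity μ A x v) (h' : HasDensity μ A x v') :
    v = v' :=
  tendsto_nhds_unique (hasDensity_iff.mp h) (hasDensity_iff.mp h')

theorem HasDensity.le_of_mem_uniformlyDensePoints {v c δ : ℝ} (h : HasDensity μ A x v)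
    (hx : x ∈ uniformlyDensePoints μ A c δ) (hδ : 0 < δ) : c ≤ v :=
  ge_of_tendsto (hasDensity_iff.mp h) <| mem_of_superset (Ioo_mem_nhdsGT hδ) hx

theorem HasDensity.exists_mem_uniformlyDensePoints {v c : ℝ} (h : HasDensity μ A x v)
    (hc : c < v) : ∃ k : ℕ, x ∈ uniformlyDensePoints μ A c (1 / (k + 1)) := by
  obtain ⟨δ, hδ, hδc⟩ := (nhdsGT_basis (0 : ℝ)).eventually_iff.mp
    ((hasDensity_iff.mp h).eventually (lt_mem_nhds hc))
  obtain ⟨k, hk⟩ := exists_nat_one_div_lt hδ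
  exact ⟨k, fun r hr => (hδc ⟨hr.1, hr.2.trans hk⟩).le⟩

section ProperSpace

variable [ProperSpace X] [IsFiniteMeasureOnCompacts μ] [μ.IsOpenPosMeasure]

theorem measureReal_ball_pos (x : X) {r : ℝ} (hr : 0 < r) : 0 < μ.real (ball x r) :=
  ENNReal.toReal_pos (measure_ball_pos μ x hr).ne' measure_ball_lt_top.ne

theorem densityRatio_compl (hA : MeasurableSet A) (x : X) (r : ℝ) (hr : 0 < r) :
    densityRatio μ Aᶜ x r = 1 - densityRatio μ A x r := by
  have hsplit : μ.real (A ∩ ball x r) + μ.real (Aᶜ ∩ ball x r) = μ.real (ball x r) := by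
    simpa only [inter_comm, sdiff_eq] using
      measureReal_inter_add_sdiff (s := ball x r) hA measure_ball_lt_top.ne
  rw [densityRatio, densityRatio, eq_sub_iff_add_eq, ← add_div, add_comm, hsplit,
    div_self (measureReal_ball_pos x hr).ne']

theorem HasDensity.compl (hA : MeasurableSet A) {v : ℝ} (h : HasDensity μ A x v) :
    HasDensity μ Aᶜ x (1 - v) :=
  ((hasDensity_iff.mp h).const_sub 1).congr' <| eventually_nhdsWithin_of_forall
    fun r hr => (densityRatio_compl hA x r hr).symm

theorem densityRatio_add_le_one [OpensMeasurableSpace X] {B : Set X} (hB : MeasurableSet B)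
    (hAB : μ (A ∩ B) = 0) (x : X) {r : ℝ} (hr : 0 < r) :
    densityRatio μ A x r + densityRatio μ B x r ≤ 1 := by
  have hfin : μ (ball x r) ≠ ∞ := measure_ball_lt_top.ne
  have hnull : μ.real ((A ∩ ball x r) ∩ (B ∩ ball x r)) = 0 := by
    rw [measureReal_def, ENNReal.toReal_eq_zero_iff]
    exact Or.inl (measure_mono_null (inter_subset_inter inter_subset_left inter_subset_left) hAB)
  have h : μ.real (A ∩ ball x r) + μ.real (B ∩ ball x r) ≤ μ.real (ball x r) := by
    rw [← measureReal_union_add_inter (hB.inter measurableSet_ball)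
      (measure_ne_top_of_subset inter_subset_right hfin)
      (measure_ne_top_of_subset inter_subset_right hfin), hnull, add_zero]
    exact measureReal_mono (union_subset inter_subset_right inter_subset_right) hfin
  rw [densityRatio, densityRatio, ← add_div, div_le_one (measureReal_ball_pos x hr)]
  exact h

end ProperSpace

end DensityRatio

section FiniteDimensional

variable {E : Type*} [NormedAddCommGroup E] [NormedSpace ℝ E] [FiniteDimensional ℝ E]
  [MeasurableSpace E] [BorelSpace E] {μ : Measure E} [μ.IsAddHaarMeasure] {A : Set E}

/-- Spheres are null, so moving the centre slightly changes `A ∩ ball x r` by a set of small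
measure. -/
theorem continuous_measureReal_inter_ball [Nontrivial E] (hA : MeasurableSet A) (r : ℝ) :
    Continuous fun x => μ.real (A ∩ ball x r) := by
  refine continuous_iff_continuousAt.mpr fun x₀ => ?_
  have hfin : μ (ball x₀ (r + 1)) ≠ ∞ := measure_ball_lt_top.ne
  refine (ENNReal.tendsto_toReal (ne_top_of_le_ne_top hfin (measure_mono ?_))).comp <|
    tendsto_measure_of_ae_tendsto_indicator (𝓝 x₀) (hA.inter measurableSet_ball)
      (fun x => hA.inter measurableSet_ball) measurableSet_ball hfin ?_ ?_
  · exact inter_subset_right.trans (ball_subset_ball (by linarith))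
  · filter_upwards [ball_mem_nhds x₀ one_pos] with x hx z hz
    calc dist z x₀ ≤ dist z x + dist x x₀ := dist_triangle _ _ _
      _ < r + 1 := add_lt_add (mem_ball.mp hz.2) hx
  · filter_upwards [measure_eq_zero_iff_ae_notMem.mp (μ.addHaar_sphere x₀ r)] with z hz
    have hdist : ContinuousAt (fun x => dist z x) x₀ := by fun_prop
    rcases lt_or_gt_of_ne (hz : dist z x₀ ≠ r) with h | h
    · filter_upwards [hdist.eventually_lt continuousAt_const h] with x hx
      simp only [mem_inter_iff, mem_ball, hx, h]
    · filter_upwards [continuousAt_const.eventually_lt hdist h] with x hx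
      simp only [mem_inter_iff, mem_ball, hx.not_gt, h.not_gt]

theorem continuous_densityRatio [Nontrivial E] (hA : MeasurableSet A) (r : ℝ) :
    Continuous fun x => densityRatio μ A x r := by
  simp only [densityRatio, measureReal_def, μ.addHaar_ball_center _ r]
  exact (continuous_measureReal_inter_ball hA r).div_const _

theorem isClosed_uniformlyDensePoints [Nontrivial E] (hA : MeasurableSet A) (c δ : ℝ) :
    IsClosed (uniformlyDensePoints μ A c δ) := by
  simp only [uniformlyDensePoints, ofPred_forall]
  exact isClosed_biInter fun r _ => isClosed_le continuous_const (continuous_densityRatio hA r)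

theorem ae_hasDensity_indicator [Nontrivial E] (hA : MeasurableSet A) :
    ∀ᵐ x ∂μ, HasDensity μ A x (A.indicator 1 x) := by
  filter_upwards [Besicovitch.ae_tendsto_measure_inter_div_of_measurableSet μ hA] with x hx
  have hind : (A.indicator (1 : E → ℝ≥0∞) x).toReal = A.indicator 1 x := by
    by_cases hxA : x ∈ A <;> simp [hxA]
  have hne : A.indicator (1 : E → ℝ≥0∞) x ≠ ∞ := by
    by_cases hxA : x ∈ A <;> simp [hxA]
  rw [hasDensity_iff, ← hind]
  refine ((ENNReal.tendsto_toReal hne).comp hx).congr' <| eventually_nhdsWithin_of_forall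
    fun r _ => ?_
  have hball : closedBall x r =ᵐ[μ] ball x r :=
    (ae_eq_of_subset_of_measure_ge ball_subset_closedBall
      (μ.addHaar_closedBall_eq_addHaar_ball x r).le measurableSet_ball.nullMeasurableSet
      measure_closedBall_lt_top.ne).symm
  rw [Function.comp_apply, ENNReal.toReal_div, densityRatio, measureReal_def, measureReal_def,
    measure_congr ((ae_eq_refl A).inter hball), measure_congr hball]

end FiniteDimensional

section Euclidean

variable {E : Type*} [NormedAddCommGroup E] [NormedSpace ℝ E] [FiniteDimensional ℝ E]

theorem IsClosed.exists_euclideanDist_le {F : Set E} (hF : IsClosed F) (hne : F.Nonempty)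
    (w : E) : ∃ y ∈ F, ∀ z ∈ F, Euclidean.dist y w ≤ Euclidean.dist z w := by
  obtain ⟨_, ⟨y, hyF, rfl⟩, hy⟩ :=
    (toEuclidean.isClosed_image.mpr hF).exists_infDist_eq_dist (hne.image toEuclidean)
      (toEuclidean w)
  refine ⟨y, hyF, fun z hz => ?_⟩
  rw [Euclidean.dist, Euclidean.dist, dist_comm, ← hy, dist_comm]
  exact infDist_le_dist_of_mem (mem_image_of_mem _ hz)

theorem innerSL_comp_toEuclidean_ne_zero {b : EuclideanSpace ℝ (Fin (Module.finrank ℝ E))}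
    (hb : b ≠ 0) :
    (innerSL ℝ b).comp (toEuclidean : E ≃L[ℝ] _).toContinuousLinearMap ≠ 0 := by
  intro h
  have hbb : ⟪b, b⟫ = 0 := by simpa using congrArg (fun g => g (toEuclidean.symm b)) h
  exact hb (inner_self_eq_zero.mp hbb)

theorem add_smul_mem_euclideanBall_iff {w y u : E} {s : ℝ} (hs : 0 < s) :
    y + s • u ∈ Euclidean.ball w (Euclidean.dist y w) ↔
      2 * ⟪toEuclidean y - toEuclidean w, toEuclidean u⟫ + s * ‖toEuclidean u‖ ^ 2 < 0 := by
  set b := toEuclidean y - toEuclidean w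
  have hnorm : Euclidean.dist (y + s • u) w = ‖b + s • toEuclidean u‖ := by
    rw [Euclidean.dist, dist_eq_norm, map_add, map_smul, add_sub_right_comm]
  have hsq : ‖b + s • toEuclidean u‖ ^ 2 =
      ‖b‖ ^ 2 + s * (2 * ⟪b, toEuclidean u⟫ + s * ‖toEuclidean u‖ ^ 2) := by
    rw [norm_add_sq_real, real_inner_smul_right, norm_smul, Real.norm_eq_abs, abs_of_pos hs]
    ring
  change Euclidean.dist (y + s • u) w < dist (toEuclidean y) (toEuclidean w) ↔ _
  rw [hnorm, dist_eq_norm, ← sq_lt_sq₀ (norm_nonneg _) (norm_nonneg _), hsq,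
    add_lt_iff_neg_left, mul_neg_iff]
  constructor
  · rintro (⟨-, h⟩ | ⟨h, -⟩)
    exacts [h, absurd h hs.not_gt]
  · exact fun h => Or.inl ⟨hs, h⟩

end Euclidean

section HalfSpace

variable {E : Type*} [NormedAddCommGroup E] [NormedSpace ℝ E] [FiniteDimensional ℝ E]
  [MeasurableSpace E] [BorelSpace E] {μ : Measure E} [μ.IsAddHaarMeasure]

theorem addHaar_setOf_eq_zero (f : E →L[ℝ] ℝ) (hf : f ≠ 0) : μ {u | f u = 0} = 0 := by
  refine μ.addHaar_submodule (LinearMap.ker (f : E →ₗ[ℝ] ℝ)) fun h => hf ?_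
  ext u
  simpa using (LinearMap.ker_eq_top.mp h ▸ rfl : (f : E →ₗ[ℝ] ℝ) u = 0)

theorem measure_inter_setOf_neg (f : E →L[ℝ] ℝ) (hf : f ≠ 0) {S : Set E} (hS : -S = S) :
    μ (S ∩ {u | f u < 0}) = μ S / 2 := by
  have hdiff : (S \ {u | f u < 0} : Set E) =ᵐ[μ] (S ∩ {u | 0 < f u} : Set E) := by
    have hsplit : S \ {u | f u < 0} = S ∩ {u | 0 < f u} ∪ S ∩ {u | f u = 0} := by
      ext u
      simp only [Set.mem_sdiff, mem_inter_iff, mem_union, mem_ofPred_eq, not_lt]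
      constructor
      · rintro ⟨hu, h⟩
        exact h.lt_or_eq.imp (⟨hu, ·⟩) (⟨hu, ·.symm⟩)
      · rintro (⟨hu, h⟩ | ⟨hu, h⟩)
        exacts [⟨hu, h.le⟩, ⟨hu, h.ge⟩]
    rw [hsplit]
    exact union_ae_eq_left_of_ae_eq_empty
      (ae_eq_empty.mpr (measure_mono_null inter_subset_right (addHaar_setOf_eq_zero f hf)))
  have hneg : -(S ∩ {u | f u < 0}) = S ∩ {u | 0 < f u} := by
    ext u
    simp only [Set.mem_neg, mem_inter_iff, mem_ofPred_eq, map_neg, neg_lt_zero]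
    rw [← Set.mem_neg, hS]
  rw [ENNReal.eq_div_iff two_ne_zero ENNReal.ofNat_ne_top, two_mul]
  calc μ (S ∩ {u | f u < 0}) + μ (S ∩ {u | f u < 0})
      = μ (S ∩ {u | f u < 0}) + μ (S \ {u | f u < 0}) := by
        rw [measure_congr hdiff, ← hneg, Measure.measure_neg]
    _ = μ S :=
      measure_inter_add_sdiff S (measurableSet_lt f.continuous.measurable measurable_const)

theorem densityRatio_eq_preimage_homothety (B : Set E) (y : E) {s : ℝ} (hs : 0 < s) :
    densityRatio μ B y s =
      μ.real (ball 0 1 ∩ (fun u => y + s • u) ⁻¹' B) / μ.real (ball 0 1) := by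
  have hpre : ∀ S, μ ((fun u => y + s • u) ⁻¹' S) =
      ENNReal.ofReal |(s ^ Module.finrank ℝ E)⁻¹| * μ S := fun S => by
    rw [show (fun u : E => y + s • u) = (fun v => y + v) ∘ (fun u => s • u) from rfl,
      preimage_comp, μ.addHaar_preimage_smul hs.ne', measure_preimage_add]
  have hball : (fun u => y + s • u) ⁻¹' ball y s = ball 0 1 := by
    ext u
    simp [norm_smul, abs_of_pos hs, hs]
  have hc : (ENNReal.ofReal |(s ^ Module.finrank ℝ E)⁻¹|).toReal ≠ 0 := by
    rw [ENNReal.toReal_ofReal (abs_nonneg _)]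
    positivity
  rw [densityRatio, ← hball, ← preimage_inter, inter_comm, measureReal_def, measureReal_def,
    measureReal_def, measureReal_def, hpre, hpre, ENNReal.toReal_mul, ENNReal.toReal_mul,
    mul_div_mul_left _ _ hc]

end HalfSpace

section TangentBall

variable {E : Type*} [NormedAddCommGroup E] [NormedSpace ℝ E] [FiniteDimensional ℝ E]
  [MeasurableSpace E] [BorelSpace E] {μ : Measure E} [μ.IsAddHaarMeasure] {A : Set E}

/-- Blown up at `y`, the ball converges to the half-space bounded by its tangent hyperplane
at `y`. -/
theorem tendsto_measure_ball_inter_preimage_euclideanBall {w y : E} (hyw : y ≠ w) :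
    Tendsto (fun s : ℝ => μ (ball 0 1 ∩
        (fun u => y + s • u) ⁻¹' Euclidean.ball w (Euclidean.dist y w))) (𝓝[>] 0)
      (𝓝 (μ (ball 0 1 ∩ {u | ⟪toEuclidean y - toEuclidean w, toEuclidean u⟫ < 0}))) := by
  set b := toEuclidean y - toEuclidean w
  set f := (innerSL ℝ b).comp (toEuclidean : E ≃L[ℝ] _).toContinuousLinearMap
  have hf : f ≠ 0 :=
    innerSL_comp_toEuclidean_ne_zero (sub_ne_zero.mpr (toEuclidean.injective.ne hyw))
  refine tendsto_measure_of_ae_tendsto_indicator _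
    (measurableSet_ball.inter (measurableSet_lt f.continuous.measurable measurable_const))
    (fun s => measurableSet_ball.inter
      (Euclidean.isOpen_ball.preimage (by fun_prop)).measurableSet)
    measurableSet_ball measure_ball_lt_top.ne (Eventually.of_forall fun _ => inter_subset_left) ?_
  filter_upwards [measure_eq_zero_iff_ae_notMem.mp (addHaar_setOf_eq_zero (μ := μ) f hf)]
    with u (hu : ⟪b, toEuclidean u⟫ ≠ 0)
  rcases lt_or_gt_of_ne hu with h | h
  · have hcont :
        ContinuousAt (fun s : ℝ => 2 * ⟪b, toEuclidean u⟫ + s * ‖toEuclidean u‖ ^ 2) 0 := by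
      fun_prop
    filter_upwards [self_mem_nhdsWithin, nhdsWithin_le_nhds <|
      hcont.eventually_lt (continuousAt_const (y := (0 : ℝ))) (by simp; linarith)]
      with s hs hlt
    rw [mem_inter_iff, mem_inter_iff, mem_preimage, add_smul_mem_euclideanBall_iff hs]
    exact and_congr_right' (iff_of_true hlt h)
  · filter_upwards [self_mem_nhdsWithin] with s (hs : 0 < s)
    have hge : ¬ 2 * ⟪b, toEuclidean u⟫ + s * ‖toEuclidean u‖ ^ 2 < 0 :=
      not_lt.mpr (by positivity)
    rw [mem_inter_iff, mem_inter_iff, mem_preimage, add_smul_mem_euclideanBall_iff hs]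
    exact and_congr_right' (iff_of_false hge h.not_gt)

theorem hasDensity_euclideanBall_of_ne {w y : E} (hyw : y ≠ w) :
    HasDensity μ (Euclidean.ball w (Euclidean.dist y w)) y (1 / 2) := by
  set b := toEuclidean y - toEuclidean w
  have hhalf : μ (ball 0 1 ∩ {u | ⟪b, toEuclidean u⟫ < 0}) = μ (ball 0 1) / 2 :=
    measure_inter_setOf_neg
      ((innerSL ℝ b).comp (toEuclidean : E ≃L[ℝ] _).toContinuousLinearMap)
      (innerSL_comp_toEuclidean_ne_zero (sub_ne_zero.mpr (toEuclidean.injective.ne hyw)))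
      (by simp)
  have hratio : (μ (ball 0 1 ∩ {u | ⟪b, toEuclidean u⟫ < 0})).toReal / μ.real (ball 0 1) =
      1 / 2 := by
    rw [hhalf, ENNReal.toReal_div, ← measureReal_def]
    field_simp [(measureReal_ball_pos (μ := μ) (0 : E) one_pos).ne']
    norm_num
  have hlim := (ENNReal.tendsto_toReal (measure_ne_top_of_subset inter_subset_left
    measure_ball_lt_top.ne)).comp (tendsto_measure_ball_inter_preimage_euclideanBall (μ := μ) hyw)
  rw [hasDensity_iff, ← hratio]
  exact (hlim.div_const _).congr' <| eventually_nhdsWithin_of_forall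
    fun s hs => (densityRatio_eq_preimage_homothety _ y hs).symm

theorem euclideanBall_subset_compl_support_restrict (hA : MeasurableSet A) {w y : E}
    (hw : w ∈ (μ.restrict A).supportᶜ) (hyw : y ≠ w)
    (hy : ∀ z ∈ muFrontier μ A, Euclidean.dist y w ≤ Euclidean.dist z w) :
    Euclidean.ball w (Euclidean.dist y w) ⊆ (μ.restrict A).supportᶜ := by
  have hconv : Convex ℝ (Euclidean.ball w (Euclidean.dist y w)) :=
    (convex_ball _ _).linear_preimage (toEuclidean.toLinearEquiv.toLinearMap)
  have hdisj : Disjoint (Euclidean.ball w (Euclidean.dist y w)) (muFrontier μ A) :=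
    disjoint_left.mpr fun z hzB hzF => (hy z hzF).not_gt hzB
  refine (hconv.isPreconnected.subset_compl_support_restrict_or hA hdisj).resolve_right
    fun h => disjoint_left.mp (disjoint_compl_support_restrict hA) hw
      (h (Euclidean.mem_ball_self (dist_pos.mpr (toEuclidean.injective.ne hyw))))

theorem not_subset_uniformlyDensePoints [Nontrivial E] (hA : MeasurableSet A) {θ δ : ℝ}
    (hθ : 0 < θ) (hδ : 0 < δ) {U : Set E} (hU : IsOpen U)
    (hFU : (muFrontier μ A ∩ U).Nonempty) :
    ¬ muFrontier μ A ∩ U ⊆ uniformlyDensePoints μ A (1 / 2 + θ) δ := by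
  intro hsub
  obtain ⟨x, hxF, hxU⟩ := hFU
  have hnull : μ ((muFrontier μ A ∩ U) \ A) = 0 := by
    refine measure_mono_null (fun z hz => ?_) (ae_iff.mp (ae_hasDensity_indicator hA))
    intro hdens
    rw [indicator_of_notMem hz.2] at hdens
    have := hdens.le_of_mem_uniformlyDensePoints (hsub hz.1) hδ
    linarith
  obtain ⟨r, hr, hrU⟩ := Euclidean.nhds_basis_ball.mem_iff.mp (hU.mem_nhds hxU)
  have hball : Euclidean.ball x (r / 2) ⊆ U := fun z hz => hrU (lt_trans hz (half_lt_self hr))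
  obtain ⟨w, hwx, hwN⟩ := exists_mem_compl_support_restrict hxF Euclidean.isOpen_ball
    (Euclidean.mem_ball_self (half_pos hr)) (measure_mono_null (by gcongr) hnull)
  obtain ⟨y, hyF, hy⟩ := isClosed_muFrontier.exists_euclideanDist_le ⟨x, hxF⟩ w
  have hwF : w ∉ muFrontier μ A := fun h => by
    rw [muFrontier_eq_support_inter_support] at h
    exact hwN h.1
  have hyw : y ≠ w := ne_of_mem_of_not_mem hyF hwF
  have hyU : y ∈ U := hrU <| calc
    Euclidean.dist y x ≤ Euclidean.dist y w + Euclidean.dist w x := dist_triangle _ _ _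
    _ ≤ Euclidean.dist x w + Euclidean.dist w x := add_le_add_left (hy x hxF) _
    _ < r := by
      rw [show Euclidean.dist x w = Euclidean.dist w x from dist_comm _ _]
      linarith [show Euclidean.dist w x < r / 2 from hwx]
  have hAB : μ (A ∩ Euclidean.ball w (Euclidean.dist y w)) = 0 :=
    measure_mono_null (inter_subset_inter_right _
      (euclideanBall_subset_compl_support_restrict hA hwN hyw hy))
      measure_inter_compl_support_restrict
  have hB := hasDensity_iff.mp (hasDensity_euclideanBall_of_ne (μ := μ) hyw)
  obtain ⟨s, hsB, hs⟩ :=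
    ((hB.eventually (lt_mem_nhds (show 1 / 2 - θ < 1 / 2 by linarith))).and
      (Ioo_mem_nhdsGT hδ)).exists
  have hsA := hsub ⟨hyF, hyU⟩ s hs
  have hsum := densityRatio_add_le_one Euclidean.isOpen_ball.measurableSet hAB y hs.1
  linarith

end TangentBall


section Residual

variable {E : Type*} [NormedAddCommGroup E] [NormedSpace ℝ E] [FiniteDimensional ℝ E]
  [Nontrivial E] [MeasurableSpace E] [BorelSpace E] {μ : Measure E} [μ.IsAddHaarMeasure]
  {A : Set E}

theorem residual_hasDensity_half (hA : MeasurableSet A)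
    (hsolid : ∀ x, ∃ v, HasDensity μ A x v) :
    {x : muFrontier μ A | HasDensity μ A x (1 / 2)} ∈ residual (muFrontier μ A) := by
  have hnd : ∀ B, MeasurableSet B → muFrontier μ B = muFrontier μ A → ∀ m k : ℕ,
      IsNowhereDense ((↑) ⁻¹' uniformlyDensePoints μ B (1 / 2 + 1 / (m + 1)) (1 / (k + 1)) :
        Set (muFrontier μ A)) := by
    intro B hB hBA m k
    refine isNowhereDense_preimage_val (isClosed_uniformlyDensePoints hB _ _) fun U hU hFU => ?_
    rw [← hBA] at hFU ⊢
    exact not_subset_uniformlyDensePoints hB Nat.one_div_pos_of_nat Nat.one_div_pos_of_nat hU hFU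
  suffices h : IsMeagre {x : muFrontier μ A | HasDensity μ A x (1 / 2)}ᶜ by
    simpa [IsMeagre] using h
  refine IsMeagre.mono ?_ (isMeagre_iUnion fun mk : ℕ × ℕ =>
    (hnd A hA rfl mk.1 mk.2).isMeagre.union (hnd Aᶜ hA.compl muFrontier_compl mk.1 mk.2).isMeagre)
  intro x hx
  obtain ⟨v, hv⟩ := hsolid x
  have hne : v ≠ 1 / 2 := fun h => hx (h ▸ hv)
  rcases hne.lt_or_gt with hlt | hgt
  · obtain ⟨m, hm⟩ := exists_nat_one_div_lt (show 0 < 1 / 2 - v by linarith)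
    obtain ⟨k, hk⟩ := (hv.compl hA).exists_mem_uniformlyDensePoints
      (c := 1 / 2 + 1 / (m + 1)) (by linarith)
    exact mem_iUnion.mpr ⟨(m, k), Or.inr hk⟩
  · obtain ⟨m, hm⟩ := exists_nat_one_div_lt (show 0 < v - 1 / 2 by linarith)
    obtain ⟨k, hk⟩ := hv.exists_mem_uniformlyDensePoints
      (c := 1 / 2 + 1 / (m + 1)) (by linarith)
    exact mem_iUnion.mpr ⟨(m, k), Or.inl hk⟩

theorem exists_hasDensity_half (hA : MeasurableSet A) (hA₀ : μ A ≠ 0) (hAc₀ : μ Aᶜ ≠ 0)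
    (hsolid : ∀ x, ∃ v, HasDensity μ A x v) : ∃ x, HasDensity μ A x (1 / 2) := by
  have : Nonempty (muFrontier μ A) := (muFrontier_nonempty hA hA₀ hAc₀).to_subtype
  have : CompleteSpace (muFrontier μ A) := isClosed_muFrontier.completeSpace_coe
  obtain ⟨x, hx⟩ := (dense_of_mem_residual (residual_hasDensity_half hA hsolid)).nonempty
  exact ⟨x, hx⟩

end Residual

instance (p : ℝ≥0∞) [Fact (1 ≤ p)] (n : ℕ) : (pVolume p n).IsAddHaarMeasure := by
  unfold pVolume
  infer_instance

/-- **Solid subsets of `ℝⁿ` (with any `ℓᵖ` metric) have density `1/2` at comeager many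
points of their `μ`-frontier.** If `A ⊆ ℝⁿ` is measurable with `λ(A) > 0` and
`λ(ℝⁿ∖A) > 0`, and the density `D_A(x)` exists at every point, then
`{x ∈ Fr_μ(A) | D_A(x) = 1/2}` is comeager in `Fr_μ(A)`; in particular some point has
density `1/2`, and consequently there is no nontrivial measurable set whose density is `0`
or `1` at every point. -/
theorem stmt_17 (n : ℕ) (hn : 1 ≤ n) (p : ℝ≥0∞) [Fact (1 ≤ p)]
    (A : Set (PiLp p fun _ : Fin n => ℝ)) (hA : MeasurableSet A)
    (hApos : 0 < pVolume p n A) (hAcpos : 0 < pVolume p n Aᶜ)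
    (hsolid : ∀ x, ∃ v : ℝ, HasDensity (pVolume p n) A x v) :
    {x : ↥(muFrontier (pVolume p n) A) |
        HasDensity (pVolume p n) A (↑x) (1 / 2)} ∈
      residual ↥(muFrontier (pVolume p n) A) ∧
    (∃ x, HasDensity (pVolume p n) A x (1 / 2)) ∧
    ∀ A' : Set (PiLp p fun _ : Fin n => ℝ), MeasurableSet A' →
      0 < pVolume p n A' → 0 < pVolume p n A'ᶜ →
      ¬ ∀ x, HasDensity (pVolume p n) A' x 0 ∨ HasDensity (pVolume p n) A' x 1 := by
  have : Nonempty (Fin n) := ⟨⟨0, hn⟩⟩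
  refine ⟨residual_hasDensity_half hA hsolid,
    exists_hasDensity_half hA hApos.ne' hAcpos.ne' hsolid, fun A' hA' hA'₀ hA'c₀ h01 => ?_⟩
  obtain ⟨x, hx⟩ := exists_hasDensity_half hA' hA'₀.ne' hA'c₀.ne'
    fun x => (h01 x).elim (⟨0, ·⟩) (⟨1, ·⟩)
  rcases h01 x with h | h <;> exact absurd (hx.unique h) (by norm_num)
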